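/- arXiv:0807.3102 — 8 statements merged into one kernel-verified Lean document; each statement's English description precedes it below -/
import Mathlib

section
/- If S is a Hausdorff topological semigroup such that S × S is countably compact, then for every idempotent e ∈ S the maximal subgroup H(e) of S containing e is a countably compact subspace of S. -/
open Filter Topology

variable {S : Type*}

/-- `spow x n` is `x ^ n` for `n ≥ 1` in a semigroup (with junk value `x` at `0`). -/
def spow {S : Type*} [Mul S] (x : S) : ℕ → S
  | 0 => x
  | 1 => x
  | n + 2 => spow x (n + 1) * x

/-- An element of a topological semigroup is topologically periodic if every open
neighbourhood of `x` contains `x ^ n` for some `n ≥ 2`. -/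
def TopPeriodic {S : Type*} [Mul S] [TopologicalSpace S] (x : S) : Prop :=
  ∀ U : Set S, IsOpen U → x ∈ U → ∃ n : ℕ, 2 ≤ n ∧ spow x n ∈ U

/-- The Clifford part `H(S)` of a semigroup: the union of all maximal subgroups. -/
def HSet (S : Type*) [Mul S] : Set S :=
  {x | ∃ y, x * y = y * x ∧ x * y * x = x ∧ y * x * y = y}

/-- The maximal subgroup `H(e)` of a semigroup with identity the idempotent `e`. -/
def Hgrp (S : Type*) [Mul S] (e : S) : Set S :=
  {x | ∃ y, x * y = e ∧ y * x = e ∧ x * e = x ∧ e * x = x ∧ y * e = y ∧ e * y = y}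

/-- `inv` is the inversion map on the Clifford part `H(S)`: it sends each element of a
maximal subgroup to its (unique) commuting inverse. -/
def IsInvMap (S : Type*) [Mul S] (inv : S → S) : Prop :=
  ∀ x ∈ HSet S, x * inv x = inv x * x ∧ x * inv x * x = x ∧ inv x * x * inv x = inv x

/-- A topological space is countably compact if every countable open cover admits a
finite subcover. -/
def CountablyCompactSpace' (X : Type*) [TopologicalSpace X] : Prop :=
  ∀ U : ℕ → Set X, (∀ n, IsOpen (U n)) → (⋃ n, U n) = Set.univ →
    ∃ F : Finset ℕ, (⋃ n ∈ F, U n) = Set.univ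

/-- A subset of a topological space is countably compact (as a subspace) if every
countable cover by open sets of the ambient space admits a finite subcover. -/
def CountablyCompactIn {X : Type*} [TopologicalSpace X] (A : Set X) : Prop :=
  ∀ U : ℕ → Set X, (∀ n, IsOpen (U n)) → A ⊆ ⋃ n, U n →
    ∃ F : Finset ℕ, A ⊆ ⋃ n ∈ F, U n

/-- A topological space is pseudocompact if every continuous real-valued function on it
is bounded. -/
def Pseudocompact (X : Type*) [TopologicalSpace X] : Prop :=
  ∀ f : X → ℝ, Continuous f → ∃ M : ℝ, ∀ x, |f x| ≤ M

theorem stmt1 [Semigroup S] [TopologicalSpace S] [ContinuousMul S] [T2Space S]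
    (hcc : CountablyCompactSpace' (S × S)) (e : S) (he : e * e = e) :
    CountablyCompactIn (Hgrp S e) := by
  intro U hU hcov
  set A : Set (S × S) := {p : S × S | p.1 * p.2 = e ∧ p.2 * p.1 = e ∧ p.1 * e = p.1 ∧
      e * p.1 = p.1 ∧ p.2 * e = p.2 ∧ e * p.2 = p.2} with hA
  have hAclosed : IsClosed A := by
    have c1 : Continuous fun p : S × S => p.1 := continuous_fst
    have c2 : Continuous fun p : S × S => p.2 := continuous_snd
    refine IsClosed.inter (isClosed_eq (c1.mul c2) continuous_const) ?_
    refine IsClosed.inter (isClosed_eq (c2.mul c1) continuous_const) ?_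
    refine IsClosed.inter (isClosed_eq (c1.mul continuous_const) c1) ?_
    refine IsClosed.inter (isClosed_eq (continuous_const.mul c1) c1) ?_
    exact IsClosed.inter (isClosed_eq (c2.mul continuous_const) c2)
      (isClosed_eq (continuous_const.mul c2) c2)
  have himg : ∀ x ∈ Hgrp S e, ∃ p ∈ A, p.1 = x := by
    rintro x ⟨y, h1, h2, h3, h4, h5, h6⟩
    exact ⟨(x, y), ⟨h1, h2, h3, h4, h5, h6⟩, rfl⟩
  -- build a countable open cover of S × S
  set W : ℕ → Set (S × S) := fun n => Nat.rec Aᶜ (fun m _ => Prod.fst ⁻¹' U m) n with hW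
  have hWopen : ∀ n, IsOpen (W n) := by
    intro n
    cases n with
    | zero => exact hAclosed.isOpen_compl
    | succ m => exact (hU m).preimage continuous_fst
  have hWcov : (⋃ n, W n) = Set.univ := by
    ext p
    simp only [Set.mem_iUnion, Set.mem_univ, iff_true]
    by_cases hp : p ∈ A
    · obtain ⟨h1, h2, h3, h4, h5, h6⟩ := hp
      have hx : p.1 ∈ Hgrp S e := ⟨p.2, h1, h2, h3, h4, h5, h6⟩
      obtain ⟨_, ⟨m, rfl⟩, hm⟩ := hcov hx
      exact ⟨m + 1, hm⟩
    · exact ⟨0, hp⟩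
  obtain ⟨F, hF⟩ := hcc W hWopen hWcov
  refine ⟨F.image (· - 1), ?_⟩
  intro x hx
  obtain ⟨p, hpA, rfl⟩ := himg x hx
  have hp : p ∈ ⋃ n ∈ F, W n := hF ▸ Set.mem_univ p
  simp only [Set.mem_iUnion] at hp ⊢
  obtain ⟨n, hnF, hn⟩ := hp
  cases n with
  | zero => exact absurd hpA hn
  | succ m => exact ⟨m, Finset.mem_image.2 ⟨m + 1, hnF, rfl⟩, hn⟩
end

section
/- If S is a Hausdorff topological semigroup such that S × S is countably compact, then every element of every maximal subgroup H(e) of S is topologically periodic; that is, for every x ∈ H(e) and every open neighbourhood U of x there exists an integer k ≥ 2 with x^k ∈ U. -/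
open Filter Topology

variable {S : Type*}

/-!
Let `x ∈ H(e)` with group inverse `y`. By countable compactness of `S × S` the sequence
`(x ^ (n + 2), y ^ (n + 1))` has a cluster point `(c, d)`. Every term multiplies to `x`, so
`c * d = x` by continuity and the T₁ property. An open `U ∋ x` therefore contains `V * W` for
neighbourhoods `V ∋ c`, `W ∋ d`, and the sequence visits `V × W` at indices `m < n`; then
`x ^ (n + 2) * y ^ (m + 1) = x ^ (n - m + 1)` lies in `U`.
-/

theorem CountablyCompactSpace'.countablyCompactSpace {X : Type*} [TopologicalSpace X]
    (h : CountablyCompactSpace' X) : CountablyCompactSpace X :=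
  ⟨isCountablyCompact_iff_countable_open_cover.2 fun U hU hcover => by
    obtain ⟨F, hF⟩ := h U hU (Set.univ_subset_iff.1 hcover)
    exact ⟨F, hF.ge⟩⟩

section spow

variable [Semigroup S] {x y e : S}

theorem spow_succ_succ (x : S) (n : ℕ) : spow x (n + 2) = spow x (n + 1) * x := rfl

theorem spow_succ_succ' (x : S) (n : ℕ) : spow x (n + 2) = x * spow x (n + 1) := by
  induction n with
  | zero => rfl
  | succ n ih =>
    calc spow x (n + 3) = x * spow x (n + 1) * x := by rw [← ih]; rfl
      _ = x * spow x (n + 2) := by rw [mul_assoc]; rfl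

theorem spow_succ_mul_of_mul_eq (hx : x * e = x) (n : ℕ) :
    spow x (n + 1) * e = spow x (n + 1) := by
  induction n with
  | zero => exact hx
  | succ n ih => rw [spow_succ_succ, mul_assoc, hx]

theorem spow_succ_succ_mul_of_mul_eq (hxy : x * y = e) (hx : x * e = x) (n : ℕ) :
    spow x (n + 2) * y = spow x (n + 1) := by
  rw [spow_succ_succ, mul_assoc, hxy, spow_succ_mul_of_mul_eq hx]

theorem spow_add_mul_spow_of_mul_eq (hxy : x * y = e) (hx : x * e = x) (m k : ℕ) :
    spow x (m + k + 2) * spow y (m + 1) = spow x (k + 1) := by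
  induction m with
  | zero => rw [Nat.zero_add]; exact spow_succ_succ_mul_of_mul_eq hxy hx k
  | succ m ih =>
    rw [spow_succ_succ' y, ← mul_assoc, show m + 1 + k + 2 = m + k + 1 + 2 by omega,
      spow_succ_succ_mul_of_mul_eq hxy hx, ← ih]

end spow

theorem topPeriodic_of_mapClusterPt [Semigroup S] [TopologicalSpace S] [ContinuousMul S]
    [T1Space S] {x y e : S} (hxy : x * y = e) (hx : x * e = x) {p : S × S}
    (hp : MapClusterPt p atTop fun n => (spow x (n + 2), spow y (n + 1))) :
    TopPeriodic x := by
  have hpx : p.1 * p.2 = x :=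
    isClosed_singleton.mem_of_mapClusterPt
      (hp.continuousAt_comp (f := fun q : S × S => q.1 * q.2) continuous_mul.continuousAt)
      (Eventually.of_forall fun n => spow_add_mul_spow_of_mul_eq hxy hx n 0)
  intro U hU hxU
  have hUp : (fun q : S × S => q.1 * q.2) ⁻¹' U ∈ 𝓝 p :=
    continuous_mul.continuousAt.preimage_mem_nhds (hU.mem_nhds (hpx ▸ hxU))
  rw [nhds_prod_eq, mem_prod_iff] at hUp
  obtain ⟨V, hV, W, hW, hVW⟩ := hUp
  have hfreq : ∃ᶠ n in atTop, spow x (n + 2) ∈ V ∧ spow y (n + 1) ∈ W :=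
    hp.frequently (prod_mem_nhds hV hW)
  obtain ⟨m, -, hm⟩ := frequently_atTop.1 hfreq 0
  obtain ⟨n, hmn, hn⟩ := frequently_atTop.1 hfreq (m + 1)
  obtain ⟨k, rfl⟩ := Nat.exists_eq_add_of_le hmn
  refine ⟨k + 2, by omega, ?_⟩
  have hmem : spow x (m + 1 + k + 2) * spow y (m + 1) ∈ U := hVW (Set.mk_mem_prod hn.1 hm.2)
  rwa [show m + 1 + k + 2 = m + (k + 1) + 2 by omega,
    spow_add_mul_spow_of_mul_eq hxy hx] at hmem

theorem stmt2_general [Semigroup S] [TopologicalSpace S] [ContinuousMul S] [T2Space S]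
    (hcc : CountablyCompactSpace' (S × S)) (e : S) :
    ∀ x ∈ Hgrp S e, TopPeriodic x := by
  rintro x ⟨y, hxy, -, hxe, -⟩
  have := hcc.countablyCompactSpace
  obtain ⟨p, -, hp⟩ := CountablyCompactSpace.isCountablyCompact_univ.seq_clusterPt
    (fun n => (spow x (n + 2), spow y (n + 1))) (Eventually.of_forall fun _ => trivial)
  exact topPeriodic_of_mapClusterPt hxy hxe hp

theorem stmt2 [Semigroup S] [TopologicalSpace S] [ContinuousMul S] [T2Space S]
    (hcc : CountablyCompactSpace' (S × S)) (e : S) (he : e * e = e) :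
    ∀ x ∈ Hgrp S e, TopPeriodic x :=
  stmt2_general hcc e
end

section
/- If S is a Hausdorff topological semigroup such that S × S is countably compact, then each maximal subgroup H(e) of S, with the subspace topology, is a topological group (i.e., the inversion of H(e) is continuous). -/
open Filter Topology

variable {S : Type*}

/-- power with base case `e` : `pw e g n = g ^ n` (with `pw e g 0 = e`). -/
private def pw [Mul S] (e g : S) : ℕ → S := fun n => Nat.rec e (fun _ ih => ih * g) n

/-- reversed power: `qw e z n = z ^ n` multiplied on the left. -/
private def qw [Mul S] (e z : S) : ℕ → S := fun n => Nat.rec e (fun _ ih => z * ih) n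

section Algebra

variable [Semigroup S] {e : S} {iv : S → S}

private lemma pw_zero [Mul S] (e g : S) : pw e g 0 = e := rfl
private lemma pw_succ [Mul S] (e g : S) (n : ℕ) : pw e g (n+1) = pw e g n * g := rfl
private lemma qw_zero [Mul S] (e z : S) : qw e z 0 = e := rfl
private lemma qw_succ [Mul S] (e z : S) (n : ℕ) : qw e z (n+1) = z * qw e z n := rfl

private lemma he_mem (he : e * e = e) : e ∈ Hgrp S e := ⟨e, he, he, he, he, he, he⟩

private lemma hg_mul_e {g : S} (hg : g ∈ Hgrp S e) : g * e = g := by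
  obtain ⟨y, _, _, h3, _, _, _⟩ := hg; exact h3

private lemma hg_e_mul {g : S} (hg : g ∈ Hgrp S e) : e * g = g := by
  obtain ⟨y, _, _, _, h4, _, _⟩ := hg; exact h4

variable (hiv : ∀ x ∈ Hgrp S e,
    x * iv x = e ∧ iv x * x = e ∧ iv x * e = iv x ∧ e * iv x = iv x)

include hiv

private lemma hg_mul_mem {g h : S} (hg : g ∈ Hgrp S e) (hh : h ∈ Hgrp S e) :
    g * h ∈ Hgrp S e := by
  obtain ⟨hg1, hg2, hg3, hg4⟩ := hiv g hg
  obtain ⟨hh1, hh2, hh3, hh4⟩ := hiv h hh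
  refine ⟨iv h * iv g, ?_, ?_, ?_, ?_, ?_, ?_⟩
  · calc g * h * (iv h * iv g) = g * (h * iv h * iv g) := by simp [mul_assoc]
      _ = g * (e * iv g) := by rw [hh1]
      _ = g * iv g := by rw [hg4]
      _ = e := hg1
  · calc iv h * iv g * (g * h) = iv h * (iv g * g * h) := by simp [mul_assoc]
      _ = iv h * (e * h) := by rw [hg2]
      _ = iv h * h := by rw [hg_e_mul hh]
      _ = e := hh2
  · calc g * h * e = g * (h * e) := mul_assoc _ _ _
      _ = g * h := by rw [hg_mul_e hh]
  · calc e * (g * h) = e * g * h := (mul_assoc _ _ _).symm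
      _ = g * h := by rw [hg_e_mul hg]
  · calc iv h * iv g * e = iv h * (iv g * e) := mul_assoc _ _ _
      _ = iv h * iv g := by rw [hg3]
  · calc e * (iv h * iv g) = e * iv h * iv g := (mul_assoc _ _ _).symm
      _ = iv h * iv g := by rw [hh4]

private lemma hg_inv_unique {g y : S} (hg : g ∈ Hgrp S e)
    (h2 : y * g = e) (hy : y * e = y) : iv g = y := by
  obtain ⟨hg1, hg2, hg3, hg4⟩ := hiv g hg
  calc iv g = e * iv g := hg4.symm
    _ = y * g * iv g := by rw [h2]
    _ = y * (g * iv g) := mul_assoc _ _ _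
    _ = y * e := by rw [hg1]
    _ = y := hy

private lemma hg_inv_mem {g : S} (hg : g ∈ Hgrp S e) : iv g ∈ Hgrp S e := by
  obtain ⟨hg1, hg2, hg3, hg4⟩ := hiv g hg
  exact ⟨g, hg2, hg1, hg3, hg4, hg_mul_e hg, hg_e_mul hg⟩

private lemma hg_inv_inv {g : S} (hg : g ∈ Hgrp S e) : iv (iv g) = g := by
  obtain ⟨hg1, hg2, hg3, hg4⟩ := hiv g hg
  exact hg_inv_unique hiv (hg_inv_mem hiv hg) hg1 (hg_mul_e hg)

private lemma hg_inv_mul {g h : S} (hg : g ∈ Hgrp S e) (hh : h ∈ Hgrp S e) :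
    iv (g * h) = iv h * iv g := by
  obtain ⟨hg1, hg2, hg3, hg4⟩ := hiv g hg
  obtain ⟨hh1, hh2, hh3, hh4⟩ := hiv h hh
  refine hg_inv_unique hiv (hg_mul_mem hiv hg hh) ?_ ?_
  · calc iv h * iv g * (g * h) = iv h * (iv g * g * h) := by simp [mul_assoc]
      _ = iv h * (e * h) := by rw [hg2]
      _ = iv h * h := by rw [hg_e_mul hh]
      _ = e := hh2
  · calc iv h * iv g * e = iv h * (iv g * e) := mul_assoc _ _ _
      _ = iv h * iv g := by rw [hg3]

private lemma hg_pw_mem (he : e * e = e) {g : S} (hg : g ∈ Hgrp S e) :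
    ∀ n, pw e g n ∈ Hgrp S e := by
  intro n
  induction n with
  | zero => exact he_mem he
  | succ n ih => rw [pw_succ]; exact hg_mul_mem hiv ih hg

private lemma hg_qw_mem (he : e * e = e) {z : S} (hz : z ∈ Hgrp S e) :
    ∀ n, qw e z n ∈ Hgrp S e := by
  intro n
  induction n with
  | zero => exact he_mem he
  | succ n ih => rw [qw_succ]; exact hg_mul_mem hiv hz ih

private lemma hg_pw_add (he : e * e = e) {g : S} (hg : g ∈ Hgrp S e) (m n : ℕ) :
    pw e g (m + n) = pw e g m * pw e g n := by
  induction n with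
  | zero => rw [Nat.add_zero, pw_zero, hg_mul_e (hg_pw_mem hiv he hg m)]
  | succ n ih =>
      rw [show m + (n+1) = (m + n) + 1 from rfl, pw_succ, ih, pw_succ, mul_assoc]

private lemma hg_key_cancel (he : e * e = e) {g : S} (hg : g ∈ Hgrp S e) (m d : ℕ) :
    iv (pw e g m) * pw e g (m + d) = pw e g d := by
  rw [hg_pw_add hiv he hg m d, ← mul_assoc, (hiv _ (hg_pw_mem hiv he hg m)).2.1,
    hg_e_mul (hg_pw_mem hiv he hg d)]

private lemma hg_KI (he : e * e = e) {a : S} (ha : a ∈ Hgrp S e) :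
    ∀ n, pw e a (n + 1) * qw e (iv a) n = a := by
  intro n
  induction n with
  | zero =>
      rw [pw_succ, pw_zero, qw_zero, hg_e_mul ha, hg_mul_e ha]
  | succ n ih =>
      rw [pw_succ, qw_succ]
      calc pw e a (n+1) * a * (iv a * qw e (iv a) n)
          = pw e a (n+1) * (a * (iv a * qw e (iv a) n)) := mul_assoc _ _ _
        _ = pw e a (n+1) * (a * iv a * qw e (iv a) n) := by rw [mul_assoc]
        _ = pw e a (n+1) * (e * qw e (iv a) n) := by rw [(hiv a ha).1]
        _ = pw e a (n+1) * qw e (iv a) n := by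
              rw [hg_e_mul (hg_qw_mem hiv he (hg_inv_mem hiv ha) n)]
        _ = a := ih

end Algebra

section Topo

set_option linter.unusedSectionVars false

private lemma ccFIP {X : Type*} [TopologicalSpace X] (hcc : CountablyCompactSpace' X)
    (F : ℕ → Set X) (hcl : ∀ n, IsClosed (F n)) (hne : ∀ n, (F n).Nonempty)
    (hdec : ∀ n, F (n + 1) ⊆ F n) : (⋂ n, F n).Nonempty := by
  by_contra hcon
  rw [Set.not_nonempty_iff_eq_empty] at hcon
  have hcover : (⋃ n, (F n)ᶜ) = Set.univ := by
    rw [← Set.compl_iInter, hcon, Set.compl_empty]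
  obtain ⟨Fs, hFs⟩ := hcc _ (fun n => (hcl n).isOpen_compl) hcover
  have hanti : ∀ {m n : ℕ}, m ≤ n → F n ⊆ F m := by
    intro m n hmn
    induction n, hmn using Nat.le_induction with
    | base => exact subset_rfl
    | succ n hmn ih => exact (hdec n).trans ih
  obtain ⟨x, hx⟩ := hne (Fs.sup id)
  have hxu : x ∈ ⋃ n ∈ Fs, (F n)ᶜ := by rw [hFs]; trivial
  obtain ⟨n, hnFs, hxc⟩ := Set.mem_iUnion₂.mp hxu
  exact hxc (hanti (Finset.le_sup (f := id) hnFs) hx)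

variable [Semigroup S] [TopologicalSpace S] [ContinuousMul S] [T2Space S]
variable {e : S} {iv : S → S}

private lemma shrink (he : e * e = e) (U : Set S) (hU : IsOpen U) (heU : e ∈ U) :
    ∃ V, IsOpen V ∧ e ∈ V ∧ (∀ x ∈ V, ∀ y ∈ V, x * y ∈ U) ∧ V ⊆ U := by
  have hc : ContinuousAt (fun p : S × S => p.1 * p.2) (e, e) := continuous_mul.continuousAt
  have hmem : (fun p : S × S => p.1 * p.2) ⁻¹' U ∈ 𝓝 (e, e) := by
    apply hc.preimage_mem_nhds
    apply hU.mem_nhds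
    show e * e ∈ U
    rw [he]; exact heU
  rw [nhds_prod_eq, Filter.mem_prod_iff] at hmem
  obtain ⟨s, hs, t, ht, hst⟩ := hmem
  obtain ⟨s', hs's, hs'o, hes'⟩ := mem_nhds_iff.mp hs
  obtain ⟨t', ht't, ht'o, het'⟩ := mem_nhds_iff.mp ht
  refine ⟨s' ∩ t' ∩ U, (hs'o.inter ht'o).inter hU, ⟨⟨hes', het'⟩, heU⟩, ?_, fun x hx => hx.2⟩
  intro x hx y hy
  have : (x, y) ∈ s ×ˢ t := ⟨hs's hx.1.1, ht't hy.1.2⟩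
  exact hst this

variable (hiv : ∀ x ∈ Hgrp S e,
    x * iv x = e ∧ iv x * x = e ∧ iv x * e = iv x ∧ e * iv x = iv x)

include hiv

private lemma cluster (hcc : CountablyCompactSpace' (S × S))
    (g : ℕ → S) (hg : ∀ n, g n ∈ Hgrp S e) :
    ∃ a ∈ Hgrp S e, ∀ A B : Set S, IsOpen A → IsOpen B → a ∈ A → iv a ∈ B →
      ∀ N, ∃ k, N ≤ k ∧ g k ∈ A ∧ iv (g k) ∈ B := by
  set T : ℕ → Set (S × S) := fun n => {p | ∃ k, n ≤ k ∧ p = (g k, iv (g k))} with hT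
  have h2 : ∀ n, (closure (T n)).Nonempty :=
    fun n => ⟨_, subset_closure ⟨n, le_rfl, rfl⟩⟩
  have h3 : ∀ n, closure (T (n + 1)) ⊆ closure (T n) := by
    intro n
    apply closure_mono
    rintro p ⟨k, hk, hp⟩
    exact ⟨k, (Nat.le_succ n).trans hk, hp⟩
  obtain ⟨⟨a, b⟩, hab⟩ := ccFIP hcc _ (fun n => isClosed_closure) h2 h3
  have hfreq : ∀ A B : Set S, IsOpen A → IsOpen B → a ∈ A → b ∈ B →
      ∀ N, ∃ k, N ≤ k ∧ g k ∈ A ∧ iv (g k) ∈ B := by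
    intro A B hA hB haA hbB N
    have h4 : (a, b) ∈ closure (T N) := Set.mem_iInter.mp hab N
    obtain ⟨p, hp1, hp2⟩ := (mem_closure_iff.mp h4) (A ×ˢ B) (hA.prod hB)
      (Set.mk_mem_prod haA hbB)
    obtain ⟨k, hk, rfl⟩ := hp2
    exact ⟨k, hk, hp1.1, hp1.2⟩
  have heqq : ∀ φ ψ : S × S → S, Continuous φ → Continuous ψ →
      (∀ k, φ (g k, iv (g k)) = ψ (g k, iv (g k))) → φ (a, b) = ψ (a, b) := by
    intro φ ψ hφ hψ hk
    by_contra hne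
    obtain ⟨O₁, O₂, hO₁, hO₂, hm₁, hm₂, hdisj⟩ := t2_separation hne
    have hWo : IsOpen (φ ⁻¹' O₁ ∩ ψ ⁻¹' O₂) :=
      (hO₁.preimage hφ).inter (hO₂.preimage hψ)
    obtain ⟨A, B, hA, hB, haA, hbB, hsub⟩ :=
      isOpen_prod_iff.mp hWo a b ⟨hm₁, hm₂⟩
    obtain ⟨k, -, hgA, hgB⟩ := hfreq A B hA hB haA hbB 0
    have hin := hsub (Set.mk_mem_prod hgA hgB)
    have h1 : φ (g k, iv (g k)) ∈ O₁ := hin.1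
    have h2' : ψ (g k, iv (g k)) ∈ O₂ := hin.2
    rw [hk k] at h1
    exact Set.disjoint_left.mp hdisj h1 h2'
  have hab1 : a * b = e :=
    heqq (fun p => p.1 * p.2) (fun _ => e)
      (continuous_fst.mul continuous_snd) continuous_const
      (fun k => (hiv _ (hg k)).1)
  have hab2 : b * a = e :=
    heqq (fun p => p.2 * p.1) (fun _ => e)
      (continuous_snd.mul continuous_fst) continuous_const
      (fun k => (hiv _ (hg k)).2.1)
  have hab3 : a * e = a :=
    heqq (fun p => p.1 * e) (fun p => p.1)
      (continuous_fst.mul continuous_const) continuous_fst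
      (fun k => hg_mul_e (hg k))
  have hab4 : e * a = a :=
    heqq (fun p => e * p.1) (fun p => p.1)
      (continuous_const.mul continuous_fst) continuous_fst
      (fun k => hg_e_mul (hg k))
  have hab5 : b * e = b :=
    heqq (fun p => p.2 * e) (fun p => p.2)
      (continuous_snd.mul continuous_const) continuous_snd
      (fun k => (hiv _ (hg k)).2.2.1)
  have hab6 : e * b = b :=
    heqq (fun p => e * p.2) (fun p => p.2)
      (continuous_const.mul continuous_snd) continuous_snd
      (fun k => (hiv _ (hg k)).2.2.2)
  have haG : a ∈ Hgrp S e := ⟨b, hab1, hab2, hab3, hab4, hab5, hab6⟩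
  have hbiv : iv a = b := hg_inv_unique hiv haG hab2 hab5
  refine ⟨a, haG, ?_⟩
  rw [hbiv]
  exact hfreq

end Topo

section Topo2

set_option linter.unusedSectionVars false

variable [Semigroup S] [TopologicalSpace S] [ContinuousMul S] [T2Space S]
variable {e : S} {iv : S → S}

variable (hiv : ∀ x ∈ Hgrp S e,
    x * iv x = e ∧ iv x * x = e ∧ iv x * e = iv x ∧ e * iv x = iv x)

include hiv

private lemma tb (hcc : CountablyCompactSpace' (S × S)) (he : e * e = e)
    (W : Set S) (hWo : IsOpen W) (heW : e ∈ W) :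
    ∃ F : Finset S, ∀ g ∈ Hgrp S e, ∃ c ∈ F,
      c ∈ Hgrp S e ∧ iv c * g ∈ W ∧ iv g * c ∈ W := by
  by_contra hcon
  push_neg at hcon
  have hchoice : ∀ F : Finset S, ∃ g, g ∈ Hgrp S e ∧
      ∀ c ∈ F, ¬(c ∈ Hgrp S e ∧ iv c * g ∈ W ∧ iv g * c ∈ W) := by
    intro F
    obtain ⟨g, hg, h⟩ := hcon F
    refine ⟨g, hg, fun c hc hP => ?_⟩
    obtain ⟨h1, h2, h3⟩ := hP
    exact (h c hc h1 h2) h3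
  classical
  choose w hw1 hw2 using hchoice
  set gs : ℕ → Finset S := fun n => Nat.rec ∅ (fun _ ih => insert (w ih) ih) n with hgs
  have hgs_succ : ∀ n, gs (n + 1) = insert (w (gs n)) (gs n) := fun n => rfl
  have hmono : ∀ {m n : ℕ}, m ≤ n → gs m ⊆ gs n := by
    intro m n hmn
    induction n, hmn using Nat.le_induction with
    | base => exact subset_rfl
    | succ n hmn ih =>
        refine ih.trans ?_
        rw [hgs_succ]
        exact Finset.subset_insert _ _
  have hmem : ∀ {n m : ℕ}, n < m → w (gs n) ∈ gs m := by
    intro n m h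
    apply hmono h
    rw [hgs_succ]
    exact Finset.mem_insert_self _ _
  set gq : ℕ → S := fun n => w (gs n) with hgq
  have hgqG : ∀ n, gq n ∈ Hgrp S e := fun n => hw1 _
  obtain ⟨V₁, hV₁o, heV₁, hV₁mul, -⟩ := shrink he W hWo heW
  obtain ⟨a, haG, hfreq⟩ := cluster hiv hcc gq hgqG
  set A := {x : S | iv a * x ∈ V₁} with hA
  have hAo : IsOpen A := hV₁o.preimage (continuous_mul_left (iv a))
  have haA : a ∈ A := by
    show iv a * a ∈ V₁
    rw [(hiv a haG).2.1]; exact heV₁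
  set B := {y : S | y * a ∈ V₁} with hB
  have hBo : IsOpen B := hV₁o.preimage (continuous_mul_right a)
  have hbB : iv a ∈ B := by
    show iv a * a ∈ V₁
    rw [(hiv a haG).2.1]; exact heV₁
  obtain ⟨k₁, -, hk₁A, hk₁B⟩ := hfreq A B hAo hBo haA hbB 0
  obtain ⟨k₂, hk₂ge, hk₂A, hk₂B⟩ := hfreq A B hAo hBo haA hbB (k₁ + 1)
  have hklt : k₁ < k₂ := hk₂ge
  have hcmem : gq k₁ ∈ gs k₂ := hmem hklt
  apply hw2 (gs k₂) (gq k₁) hcmem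
  have hcancel : ∀ x y : S, y ∈ Hgrp S e → (x * a) * (iv a * y) = x * y := by
    intro x y hy
    calc (x * a) * (iv a * y) = x * (a * (iv a * y)) := mul_assoc _ _ _
      _ = x * (a * iv a * y) := by rw [mul_assoc]
      _ = x * (e * y) := by rw [(hiv a haG).1]
      _ = x * y := by rw [hg_e_mul hy]
  refine ⟨hgqG k₁, ?_, ?_⟩
  · have h1 : iv (gq k₁) * a ∈ V₁ := hk₁B
    have h2 : iv a * gq k₂ ∈ V₁ := hk₂A
    have := hV₁mul _ h1 _ h2
    rwa [hcancel _ _ (hgqG k₂)] at this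
  · have h1 : iv (gq k₂) * a ∈ V₁ := hk₂B
    have h2 : iv a * gq k₁ ∈ V₁ := hk₁A
    have := hV₁mul _ h1 _ h2
    rwa [hcancel _ _ (hgqG k₁)] at this

private lemma powers_return (hcc : CountablyCompactSpace' (S × S)) (he : e * e = e)
    {a : S} (ha : a ∈ Hgrp S e) (W : Set S) (hWo : IsOpen W) (heW : e ∈ W) :
    ∃ d, 1 ≤ d ∧ ∃ u ∈ W, ∃ v ∈ W, pw e a d = u * v := by
  obtain ⟨F, hF⟩ := tb hiv hcc he W hWo heW
  have hchoose : ∀ m : ℕ, ∃ c, c ∈ F ∧ c ∈ Hgrp S e ∧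
      iv c * pw e a m ∈ W ∧ iv (pw e a m) * c ∈ W := by
    intro m
    obtain ⟨c, h1, h2, h3, h4⟩ := hF _ (hg_pw_mem hiv he ha m)
    exact ⟨c, h1, h2, h3, h4⟩
  choose cf hcf1 hcf2 hcf3 hcf4 using hchoose
  have hkey : ∀ m m' : ℕ, m < m' → cf m = cf m' →
      ∃ d, 1 ≤ d ∧ ∃ u ∈ W, ∃ v ∈ W, pw e a d = u * v := by
    intro m m' hlt heq
    refine ⟨m' - m, by omega, iv (pw e a m) * cf m, hcf4 m, iv (cf m) * pw e a m', ?_, ?_⟩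
    · rw [heq]; exact hcf3 m'
    · have hc : cf m ∈ Hgrp S e := hcf2 m
      have hstep : (iv (pw e a m) * cf m) * (iv (cf m) * pw e a m')
          = iv (pw e a m) * pw e a m' := by
        calc (iv (pw e a m) * cf m) * (iv (cf m) * pw e a m')
            = iv (pw e a m) * (cf m * (iv (cf m) * pw e a m')) := mul_assoc _ _ _
          _ = iv (pw e a m) * (cf m * iv (cf m) * pw e a m') := by rw [mul_assoc]
          _ = iv (pw e a m) * (e * pw e a m') := by rw [(hiv _ hc).1]
          _ = iv (pw e a m) * pw e a m' := by rw [hg_e_mul (hg_pw_mem hiv he ha m')]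
      rw [hstep]
      have hkc := hg_key_cancel hiv he ha m (m' - m)
      rw [show m + (m' - m) = m' from by omega] at hkc
      exact hkc.symm
  have hpig : ∃ m m' : ℕ, m ≠ m' ∧ cf m = cf m' := by
    have : ∃ m m' : ℕ, m ≠ m' ∧
        (fun n => (⟨cf n, hcf1 n⟩ : {x // x ∈ F})) m
          = (fun n => (⟨cf n, hcf1 n⟩ : {x // x ∈ F})) m' := by
      apply Finite.exists_ne_map_eq_of_infinite
    obtain ⟨m, m', hne, heq⟩ := this
    exact ⟨m, m', hne, congrArg Subtype.val heq⟩
  obtain ⟨m, m', hne, heq⟩ := hpig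
  rcases hne.lt_or_gt with h | h
  · exact hkey m m' h heq
  · exact hkey m' m h heq.symm

end Topo2

section Main

set_option linter.unusedSectionVars false

variable [Semigroup S] [TopologicalSpace S] [ContinuousMul S] [T2Space S]
variable {e : S} {iv : S → S}

variable (hiv : ∀ x ∈ Hgrp S e,
    x * iv x = e ∧ iv x * x = e ∧ iv x * e = iv x ∧ e * iv x = iv x)

include hiv

private lemma cont_at_e (hcc : CountablyCompactSpace' (S × S)) (he : e * e = e)
    (U : Set S) (hUo : IsOpen U) (heU : e ∈ U) :
    ∃ V, IsOpen V ∧ e ∈ V ∧ ∀ g ∈ Hgrp S e, g ∈ V → iv g ∈ U := by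
  by_contra hcon
  push_neg at hcon
  have hbad : ∀ V : Set S, ∃ g, (IsOpen V ∧ e ∈ V) →
      (g ∈ Hgrp S e ∧ g ∈ V ∧ iv g ∉ U) := by
    intro V
    by_cases hV : IsOpen V ∧ e ∈ V
    · obtain ⟨g, hg1, hg2, hg3⟩ := hcon V hV.1 hV.2
      exact ⟨g, fun _ => ⟨hg1, hg2, hg3⟩⟩
    · exact ⟨e, fun h => absurd h hV⟩
  choose bd hbd using hbad
  have hskr : ∀ V : Set S, ∃ V' : Set S, (IsOpen V ∧ e ∈ V) →
      (IsOpen V' ∧ e ∈ V' ∧ (∀ x ∈ V', ∀ y ∈ V', x * y ∈ V) ∧ V' ⊆ V) := by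
    intro V
    by_cases hV : IsOpen V ∧ e ∈ V
    · obtain ⟨V', h1, h2, h3, h4⟩ := shrink (e := e) he V hV.1 hV.2
      exact ⟨V', fun _ => ⟨h1, h2, h3, h4⟩⟩
    · exact ⟨V, fun h => absurd h hV⟩
  choose sk hsk using hskr
  set C : ℕ → Set S := fun n => Nat.rec U (fun _ ih => sk ih) n with hCdef
  have hCsucc : ∀ n, C (n + 1) = sk (C n) := fun n => rfl
  have hCinv : ∀ n, IsOpen (C n) ∧ e ∈ C n := by
    intro n
    induction n with
    | zero => exact ⟨hUo, heU⟩
    | succ n ih =>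
        rw [hCsucc]
        have h := hsk (C n) ih
        exact ⟨h.1, h.2.1⟩
  have hCmul : ∀ n, ∀ x ∈ C (n + 1), ∀ y ∈ C (n + 1), x * y ∈ C n := by
    intro n
    have h := hsk (C n) (hCinv n)
    rw [hCsucc]
    exact h.2.2.1
  have hCsub : ∀ n, C (n + 1) ⊆ C n := by
    intro n
    have h := hsk (C n) (hCinv n)
    rw [hCsucc]
    exact h.2.2.2
  have hCanti : ∀ {m n : ℕ}, m ≤ n → C n ⊆ C m := by
    intro m n hmn
    induction n, hmn using Nat.le_induction with
    | base => exact subset_rfl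
    | succ n hmn ih => exact (hCsub n).trans ih
  set q : ℕ → S := fun m => bd (C m) with hqdef
  have hq : ∀ m, q m ∈ Hgrp S e ∧ q m ∈ C m ∧ iv (q m) ∉ U :=
    fun m => hbd (C m) (hCinv m)
  set x : ℕ → S := fun m => iv (q m) with hxdef
  have hxG : ∀ m, x m ∈ Hgrp S e := fun m => hg_inv_mem hiv (hq m).1
  obtain ⟨a, haG, hfreq⟩ := cluster hiv hcc x hxG
  have haU : a ∉ U := by
    intro haU
    obtain ⟨k, -, hkA, -⟩ := hfreq U Set.univ hUo isOpen_univ haU (Set.mem_univ _) 0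
    exact (hq k).2.2 hkA
  set z := iv a with hzdef
  have hzG : z ∈ Hgrp S e := hg_inv_mem hiv haG
  have hz : ∀ m, z ∈ C m := by
    intro m
    set A := {x' : S | iv a * x' ∈ C (m + 1)} with hA
    have hAo : IsOpen A := (hCinv (m + 1)).1.preimage (continuous_mul_left (iv a))
    have haA : a ∈ A := by
      show iv a * a ∈ C (m + 1)
      rw [(hiv a haG).2.1]
      exact (hCinv (m + 1)).2
    obtain ⟨k, hk, hkA, -⟩ := hfreq A Set.univ hAo isOpen_univ haA (Set.mem_univ _) (m + 1)
    have h1 : iv a * x k ∈ C (m + 1) := hkA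
    have h2 : q k ∈ C (m + 1) := hCanti hk (hq k).2.1
    have h3 : (iv a * x k) * q k ∈ C m := hCmul m _ h1 _ h2
    have h4 : (iv a * x k) * q k = z := by
      have hxq : x k * q k = e := (hiv _ (hq k).1).2.1
      calc (iv a * x k) * q k = iv a * (x k * q k) := mul_assoc _ _ _
        _ = iv a * e := by rw [hxq]
        _ = z := (hiv a haG).2.2.1
    rwa [h4] at h3
  have hqw : ∀ k m : ℕ, qw e z (k + 1) ∈ C m := by
    intro k
    induction k with
    | zero =>
        intro m
        have : qw e z 1 = z := by
          rw [qw_succ, qw_zero]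
          exact (hiv a haG).2.2.1
        rw [this]
        exact hz m
    | succ k ih =>
        intro m
        rw [qw_succ]
        exact hCmul m z (hz (m + 1)) _ (ih (m + 1))
  obtain ⟨d, hd1, u, huW, v, hvW, hpw⟩ :=
    powers_return hiv hcc he haG (C 2) (hCinv 2).1 (hCinv 2).2
  have hKI := hg_KI hiv he haG (d - 1)
  rw [show d - 1 + 1 = d from by omega] at hKI
  have huv : u * v ∈ C 1 := hCmul 1 u huW v hvW
  have haU' : a ∈ U := by
    rcases Nat.eq_zero_or_pos (d - 1) with h0 | h1
    · have hG : u * v ∈ Hgrp S e := by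
        rw [← hpw]; exact hg_pw_mem hiv he haG d
      have ha2 : a = u * v := by
        rw [← hKI, hpw, h0, qw_zero, hg_mul_e hG]
      rw [ha2]
      exact hCsub 0 huv
    · have hqwC : qw e z (d - 1) ∈ C 1 := by
        have := hqw (d - 1 - 1) 1
        rwa [show d - 1 - 1 + 1 = d - 1 from by omega] at this
      have ha2 : a = (u * v) * qw e z (d - 1) := by rw [← hKI, hpw]
      rw [ha2]
      exact hCmul 0 _ huv _ hqwC
  exact haU haU'

end Main

theorem stmt3 [Semigroup S] [TopologicalSpace S] [ContinuousMul S] [T2Space S]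
    (hcc : CountablyCompactSpace' (S × S)) (e : S) (he : e * e = e)
    (inv : S → S)
    (hinv : ∀ x ∈ Hgrp S e,
      x * inv x = e ∧ inv x * x = e ∧ inv x * e = inv x ∧ e * inv x = inv x) :
    ContinuousOn inv (Hgrp S e) := by
  intro g₀ hg₀
  show Filter.Tendsto inv (nhdsWithin g₀ (Hgrp S e)) (nhds (inv g₀))
  rw [Filter.tendsto_def]
  intro s hs
  obtain ⟨B, hBs, hBo, hBm⟩ := mem_nhds_iff.mp hs
  have hg₀iv : inv g₀ ∈ Hgrp S e := hg_inv_mem hinv hg₀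
  set U' := (fun x => inv g₀ * x) ⁻¹' B with hU'
  have hU'o : IsOpen U' := hBo.preimage (continuous_mul_left _)
  have heU' : e ∈ U' := by
    show inv g₀ * e ∈ B
    rw [(hinv g₀ hg₀).2.2.1]
    exact hBm
  obtain ⟨V, hVo, heV, hV⟩ := cont_at_e hinv hcc he U' hU'o heU'
  set N := (fun g => g * inv g₀) ⁻¹' V with hN
  have hNo : IsOpen N := hVo.preimage (continuous_mul_right _)
  have hg₀N : g₀ ∈ N := by
    show g₀ * inv g₀ ∈ V
    rw [(hinv g₀ hg₀).1]
    exact heV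
  have hNmem : N ∩ Hgrp S e ∈ nhdsWithin g₀ (Hgrp S e) :=
    Filter.inter_mem (nhdsWithin_le_nhds (hNo.mem_nhds hg₀N)) self_mem_nhdsWithin
  apply Filter.mem_of_superset hNmem
  rintro g ⟨hgN, hgG⟩
  have hk : g * inv g₀ ∈ Hgrp S e := hg_mul_mem hinv hgG hg₀iv
  have hkV : g * inv g₀ ∈ V := hgN
  have hkU' : inv g₀ * inv (g * inv g₀) ∈ B := hV _ hk hkV
  have hkg : (g * inv g₀) * g₀ = g := by
    rw [mul_assoc, (hinv g₀ hg₀).2.1, hg_mul_e hgG]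
  have hexp : inv g = inv g₀ * inv (g * inv g₀) := by
    conv_lhs => rw [← hkg]
    exact hg_inv_mul hinv hk hg₀
  show inv g ∈ s
  rw [hexp]
  exact hBs hkU'
end

section
/- If S is a Hausdorff topological semigroup such that S × S is countably compact, then the Clifford part H(S) = { x ∈ S : ∃ y ∈ S, xy = yx, xyx = x, yxy = y } is a countably compact subspace of S. -/
open Filter Topology

variable {S : Type*}

theorem stmt4 [Semigroup S] [TopologicalSpace S] [ContinuousMul S] [T2Space S]
    (hcc : CountablyCompactSpace' (S × S)) :
    CountablyCompactIn (HSet S) := by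

  intro U hUopen hUcov
  by_contra hno
  push_neg at hno
  have hx : ∀ m : ℕ, ∃ x, x ∈ HSet S ∧ x ∉ ⋃ n ∈ Finset.range (m+1), U n := by
    intro m
    exact Set.not_subset.mp (hno (Finset.range (m+1)))
  choose x hxH hxU using hx
  choose y hy1 hy2 hy3 using hxH
  set C : Set (S × S) :=
    {z | z.1 * z.2 = z.2 * z.1 ∧ z.1 * z.2 * z.1 = z.1 ∧ z.2 * z.1 * z.2 = z.2} with hC
  have hCclosed : IsClosed C := by
    have h1 : IsClosed {z : S × S | z.1 * z.2 = z.2 * z.1} :=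
      isClosed_eq (continuous_fst.mul continuous_snd) (continuous_snd.mul continuous_fst)
    have h2 : IsClosed {z : S × S | z.1 * z.2 * z.1 = z.1} :=
      isClosed_eq ((continuous_fst.mul continuous_snd).mul continuous_fst) continuous_fst
    have h3 : IsClosed {z : S × S | z.2 * z.1 * z.2 = z.2} :=
      isClosed_eq ((continuous_snd.mul continuous_fst).mul continuous_snd) continuous_snd
    exact h1.inter (h2.inter h3)
  set p : ℕ → S × S := fun m => (x m, y m) with hp
  have hpC : ∀ m, p m ∈ C := fun m => ⟨hy1 m, hy2 m, hy3 m⟩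
  set F : ℕ → Set (S × S) := fun n => closure (p '' Set.Ici n) with hF
  have hFne : (⋂ n, F n).Nonempty := by
    by_contra hemp
    rw [Set.not_nonempty_iff_eq_empty] at hemp
    have hcov : (⋃ n, (F n)ᶜ) = Set.univ := by
      rw [← Set.compl_iInter, hemp, Set.compl_empty]
    obtain ⟨G, hG⟩ := hcc (fun n => (F n)ᶜ)
      (fun n => (isClosed_closure).isOpen_compl) hcov
    have hmem : p (G.sup id) ∈ ⋃ n ∈ G, (F n)ᶜ := hG ▸ Set.mem_univ _
    simp only [Set.mem_iUnion] at hmem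
    obtain ⟨n, hnG, hpn⟩ := hmem
    exact hpn (subset_closure ⟨G.sup id, Finset.le_sup (f := id) hnG, rfl⟩)
  obtain ⟨q, hq⟩ := hFne
  have hqC : q ∈ C := by
    have hq0 : q ∈ F 0 := Set.mem_iInter.mp hq 0
    have hsub : p '' Set.Ici 0 ⊆ C := by rintro _ ⟨m, _, rfl⟩; exact hpC m
    exact (hCclosed.closure_subset_iff.mpr hsub) hq0
  have hqH : q.1 ∈ HSet S := ⟨q.2, hqC.1, hqC.2.1, hqC.2.2⟩
  obtain ⟨N, hN⟩ := Set.mem_iUnion.mp (hUcov hqH)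
  have hqFN : q ∈ closure (p '' Set.Ici N) := Set.mem_iInter.mp hq N
  have hnbhd : (U N ×ˢ Set.univ : Set (S × S)) ∈ 𝓝 q :=
    ((hUopen N).prod isOpen_univ).mem_nhds ⟨hN, Set.mem_univ _⟩
  obtain ⟨z, hz1, hz2⟩ := mem_closure_iff_nhds.mp hqFN _ hnbhd
  obtain ⟨m, hmN, rfl⟩ := hz2
  have hxm : x m ∈ U N := hz1.1
  exact hxU m (Set.mem_biUnion (Finset.mem_coe.mpr
    (Finset.mem_range.mpr (Nat.lt_succ_of_le hmN))) hxm)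
end

section
/- Let S be a topological semigroup, e ∈ E(S) an idempotent, and x a topologically periodic element of the maximal subgroup H(e). If the inversion map inv : H(S) → H(S) is continuous at e, then it is continuous at x. -/
open Filter Topology

variable {S : Type*}

section helpers
variable [Semigroup S]

lemma spow_one (x : S) : spow x 1 = x := rfl

lemma spow_succ (x : S) (k : ℕ) (hk : 1 ≤ k) : spow x (k+1) = spow x k * x := by
  match k, hk with
  | (j+1), _ => rfl

lemma spow_add (x : S) (a b : ℕ) (ha : 1 ≤ a) (hb : 1 ≤ b) :
    spow x (a+b) = spow x a * spow x b := by
  induction b with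
  | zero => omega
  | succ j ih =>
    rcases Nat.lt_or_ge j 1 with h | hj
    · have : j = 0 := by omega
      subst this
      rw [spow_succ x a ha, spow_one]
    · rw [show a + (j+1) = (a+j) + 1 from rfl, spow_succ x (a+j) (by omega), ih hj,
        spow_succ x j hj, mul_assoc]

variable {y z : S} (hc : y * z = z * y) (hy : y * z * y = y) (hz : z * y * z = z)

include hy in
lemma absorb_left : ∀ k, 1 ≤ k → (y * z) * spow y k = spow y k := by
  intro k hk
  induction k with
  | zero => omega
  | succ j ih =>
    rcases Nat.lt_or_ge j 1 with h | hj
    · have : j = 0 := by omega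
      subst this
      rw [spow_one]; exact hy
    · rw [spow_succ y j hj, ← mul_assoc, ih hj]

include hc hy in
lemma absorb_right : ∀ k, 1 ≤ k → spow y k * (y * z) = spow y k := by
  intro k hk
  have base : y * (y * z) = y := by
    rw [hc, ← mul_assoc, hy]
  induction k with
  | zero => omega
  | succ j ih =>
    rcases Nat.lt_or_ge j 1 with h | hj
    · have : j = 0 := by omega
      subst this
      rw [spow_one]; exact base
    · rw [spow_succ y j hj, mul_assoc, base]

include hc in
lemma spow_comm : ∀ k, 1 ≤ k → spow y k * z = z * spow y k := by
  intro k hk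
  induction k with
  | zero => omega
  | succ j ih =>
    rcases Nat.lt_or_ge j 1 with h | hj
    · have : j = 0 := by omega
      subst this
      rw [spow_one]; exact hc
    · rw [spow_succ y j hj, mul_assoc, hc, ← mul_assoc, ih hj, mul_assoc]

include hc hy in
lemma spow_mul_inv : ∀ k, 1 ≤ k → spow y (k+1) * z = spow y k := by
  intro k hk
  rw [spow_succ y k hk, mul_assoc]
  exact absorb_right hc hy k hk

include hc hy in
lemma spow_pair : ∀ k, 1 ≤ k → spow y k * spow z k = y * z := by
  intro k hk
  induction k with
  | zero => omega
  | succ j ih =>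
    rcases Nat.lt_or_ge j 1 with h | hj
    · have : j = 0 := by omega
      subst this
      rw [spow_one, spow_one]
    · have hcz : z * y = y * z := hc.symm
      rw [spow_succ y j hj, spow_succ z j hj]
      calc spow y j * y * (spow z j * z)
          = spow y j * (y * spow z j) * z := by simp only [mul_assoc]
        _ = spow y j * (spow z j * y) * z := by rw [spow_comm hcz j hj]
        _ = (spow y j * spow z j) * (y * z) := by simp only [mul_assoc]
        _ = (y * z) * (y * z) := by rw [ih hj]
        _ = (y * z * y) * z := by simp only [mul_assoc]
        _ = y * z := by rw [hy]

include hc hy hz in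
lemma spow_mem_props : ∀ k, 1 ≤ k →
    spow y k * spow z k = spow z k * spow y k ∧
    spow y k * spow z k * spow y k = spow y k ∧
    spow z k * spow y k * spow z k = spow z k := by
  intro k hk
  have h1 := spow_pair hc hy k hk
  have h2 := spow_pair hc.symm hz k hk
  refine ⟨by rw [h1, h2, hc], ?_, ?_⟩
  · rw [h1]; exact absorb_left hy k hk
  · rw [h2]; exact absorb_left hz k hk

lemma cinv_unique (x y z : S) (h1 : x*y = y*x) (h2 : x*y*x = x) (h3 : y*x*y = y)
    (h4 : x*z = z*x) (h5 : x*z*x = x) (h6 : z*x*z = z) : y = z := by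
  have key : z * x = x * y := by
    have a1 : z*x*(y*x) = z*x := by
      rw [show z*x*(y*x) = z*(x*y*x) by simp only [mul_assoc], h2]
    have a2 : (x*z)*(x*y) = x*y := by
      rw [show (x*z)*(x*y) = (x*z*x)*y by simp only [mul_assoc], h5]
    calc z*x = z*x*(y*x) := a1.symm
      _ = (x*z)*(x*y) := by rw [← h4, h1]
      _ = x*y := a2
  calc y = y*x*y := h3.symm
    _ = y*(x*z*x)*y := by rw [h5]
    _ = (y*x)*z*(x*y) := by simp only [mul_assoc]
    _ = (z*x)*z*(x*z) := by rw [h1.symm.trans key.symm, key.symm.trans h4.symm]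
    _ = z*(x*z*x)*z := by simp only [mul_assoc]
    _ = z*x*z := by rw [h5]
    _ = z := h6

end helpers

lemma spow_continuous {S : Type*} [Mul S] [TopologicalSpace S] [ContinuousMul S] (k : ℕ) :
    Continuous (fun y : S => spow y k) := by
  induction k with
  | zero => exact continuous_id
  | succ j ih =>
    match j, ih with
    | 0, _ => exact continuous_id
    | (i+1), ih => exact ih.mul continuous_id


theorem stmt5 [Semigroup S] [TopologicalSpace S] [ContinuousMul S]
    (inv : S → S) (hinv : IsInvMap S inv)
    (e : S) (he : e * e = e) (x : S) (hx : x ∈ Hgrp S e) (hper : TopPeriodic x)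
    (hce : ContinuousWithinAt inv (HSet S) e) :
    ContinuousWithinAt inv (HSet S) x := by
  obtain ⟨x', hxx', hx'x, hxe, hex, hx'e, hex'⟩ := hx
  have hxc : x * x' = x' * x := hxx'.trans hx'x.symm
  have hxyx : x * x' * x = x := by rw [hxx']; exact hex
  have hx'xx' : x' * x * x' = x' := by rw [hx'x]; exact hex'
  have hxH : x ∈ HSet S := ⟨x', hxc, hxyx, hx'xx'⟩
  obtain ⟨hix1, hix2, hix3⟩ := hinv x hxH
  have hinv_x : inv x = x' := cinv_unique x (inv x) x' hix1 hix2 hix3 hxc hxyx hx'xx'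
  have heee : e * e * e = e := by rw [he, he]
  have heH : e ∈ HSet S := ⟨e, rfl, heee, heee⟩
  obtain ⟨hie1, hie2, hie3⟩ := hinv e heH
  have hinv_e : inv e = e := cinv_unique e (inv e) e hie1 hie2 hie3 rfl heee heee
  show Filter.Tendsto inv (nhdsWithin x (HSet S)) (nhds (inv x))
  rw [Filter.tendsto_def]
  intro W hW
  obtain ⟨W', hW'W, hW'o, hxW'⟩ := mem_nhds_iff.mp hW
  rw [hinv_x] at hxW'
  -- continuity of multiplication at (e, x')
  have hexW' : e * x' ∈ W' := by rw [hex']; exact hxW'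
  have hpre : (fun p : S × S => p.1 * p.2) ⁻¹' W' ∈ 𝓝 (e, x') :=
    continuous_mul.continuousAt.preimage_mem_nhds (hW'o.mem_nhds hexW')
  rw [mem_nhds_prod_iff'] at hpre
  obtain ⟨U₁, U₂, hU₁o, heU₁, hU₂o, hx'U₂, hUW⟩ := hpre
  have hmulW : ∀ a ∈ U₁, ∀ b ∈ U₂, a * b ∈ W' := fun a ha b hb => hUW (Set.mk_mem_prod ha hb)
  -- continuity of inv at e
  have hU₁n : U₁ ∈ 𝓝 (inv e) := by rw [hinv_e]; exact hU₁o.mem_nhds heU₁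
  have hVmem : inv ⁻¹' U₁ ∈ nhdsWithin e (HSet S) := hce hU₁n
  obtain ⟨V, hVo, heV, hVsub⟩ := mem_nhdsWithin.mp hVmem
  -- the auxiliary open sets B and C
  have hBo : IsOpen (V ∩ {s : S | s * x' ∈ U₂}) :=
    hVo.inter (hU₂o.preimage (continuous_mul_right x'))
  have heB : e ∈ V ∩ {s : S | s * x' ∈ U₂} := ⟨heV, by simp only [Set.mem_setOf_eq, hex']; exact hx'U₂⟩
  have hCo : IsOpen {s : S | s * s * x' * x' ∈ V ∩ {s : S | s * x' ∈ U₂}} := by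
    exact hBo.preimage (((continuous_id.mul continuous_id).mul continuous_const).mul continuous_const)
  have hxC : x ∈ {s : S | s * s * x' * x' ∈ V ∩ {s : S | s * x' ∈ U₂}} := by
    simp only [Set.mem_setOf_eq, mul_assoc x x x', hxx', hxe]
    exact heB
  obtain ⟨n, hn2, hnC⟩ := hper _ hCo hxC
  simp only [Set.mem_setOf_eq] at hnC
  have e1 : spow x n * spow x n = spow x (n + n) := (spow_add x n n (by omega) (by omega)).symm
  have e2 : spow x (n + n) * x' = spow x (n + n - 1) := by
    have h := spow_mul_inv hxc hxyx (n + n - 1) (by omega)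
    rw [show n + n - 1 + 1 = n + n by omega] at h
    exact h
  have e3 : spow x (n + n - 1) * x' = spow x (n + n - 2) := by
    have h := spow_mul_inv hxc hxyx (n + n - 2) (by omega)
    rw [show n + n - 2 + 1 = n + n - 1 by omega] at h
    exact h
  rw [e1, e2, e3] at hnC
  set m : ℕ := n + n - 2 with hmdef
  have hm2 : 2 ≤ m := by omega
  have hmV : spow x m ∈ V := hnC.1
  have e4 : spow x m * x' = spow x (m - 1) := by
    have h := spow_mul_inv hxc hxyx (m - 1) (by omega)
    rw [show m - 1 + 1 = m by omega] at h
    exact h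
  have hm1U₂ : spow x (m - 1) ∈ U₂ := by rw [← e4]; exact hnC.2
  -- the neighbourhood O of x
  have hOo : IsOpen ((fun y : S => spow y m) ⁻¹' V ∩ (fun y : S => spow y (m - 1)) ⁻¹' U₂) :=
    (hVo.preimage (spow_continuous m)).inter (hU₂o.preimage (spow_continuous (m - 1)))
  have hxO : x ∈ (fun y : S => spow y m) ⁻¹' V ∩ (fun y : S => spow y (m - 1)) ⁻¹' U₂ :=
    ⟨hmV, hm1U₂⟩
  refine mem_nhdsWithin.mpr ⟨_, hOo, hxO, ?_⟩
  rintro y ⟨⟨hyV, hyU₂⟩, hyH⟩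
  obtain ⟨hcy, hyy, hzz⟩ := hinv y hyH
  set z := inv y with hzdef
  -- spow y m is in HSet with inverse spow z m
  obtain ⟨hp1, hp2, hp3⟩ := spow_mem_props hcy hyy hzz m (by omega)
  have hymH : spow y m ∈ HSet S := ⟨spow z m, hp1, hp2, hp3⟩
  obtain ⟨hq1, hq2, hq3⟩ := hinv (spow y m) hymH
  have hinvym : inv (spow y m) = spow z m :=
    cinv_unique (spow y m) (inv (spow y m)) (spow z m) hq1 hq2 hq3 hp1 hp2 hp3
  -- the key algebraic identity : spow z m * spow y (m-1) = z = inv y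
  have hkey : spow z m * spow y (m - 1) = z := by
    have hsplit : spow z (m - 1 + 1) = spow z (m - 1) * z := spow_succ z (m - 1) (by omega)
    rw [show m - 1 + 1 = m by omega] at hsplit
    have hcomm : z * spow y (m - 1) = spow y (m - 1) * z :=
      (spow_comm hcy (m - 1) (by omega)).symm
    have hpair : spow z (m - 1) * spow y (m - 1) = z * y :=
      spow_pair hcy.symm hzz (m - 1) (by omega)
    calc spow z m * spow y (m - 1)
        = spow z (m - 1) * (z * spow y (m - 1)) := by rw [hsplit, mul_assoc]
      _ = spow z (m - 1) * (spow y (m - 1) * z) := by rw [hcomm]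
      _ = (spow z (m - 1) * spow y (m - 1)) * z := by rw [mul_assoc]
      _ = z * y * z := by rw [hpair]
      _ = z := hzz
  -- finish
  have h1 : inv (spow y m) ∈ U₁ := hVsub ⟨hyV, hymH⟩
  rw [hinvym] at h1
  have : spow z m * spow y (m - 1) ∈ W' := hmulW _ h1 _ hyU₂
  rw [hkey] at this
  exact hW'W this
end

section
/- Let S be a regular (T₃) topological semigroup such that S × S is countably compact. Then the projection π : H(S) → E(S), π(x) = x·x⁻¹, is continuous. -/
/-!
Write `e = x x⁻¹`. Countable compactness of `S × S` gives every sequence of pairs a cluster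
point, and being mutually inverse in a maximal subgroup is a closed condition on pairs.
Applied to `(xⁿ, x⁻ⁿ)` this shows that `e` lies in the closure of the powers of `x`.

If `π` were discontinuous at `x`, there would be an open `U ∋ e`, and by regularity a closed
neighbourhood `C ⊆ U` of `e`, such that elements `w ∈ H(S)` with `π w ∉ U` come arbitrarily
close to `x`. As `e` is idempotent, for every `k` some power `xⁿ` is so close to `e` that its
first `k` powers lie in `C`, and the same holds for `wⁿ` when `w` is close to `x`;
moreover `π (wⁿ) = π w ∉ U`. A cluster point `(p, q)` of the pairs `(wⁿ, (wⁿ)⁻¹)` so obtained has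
`q = p⁻¹` and `π p ∉ U`, while all powers of `p` lie in `C`, whence `π p ∈ C ⊆ U`.
-/

open Filter Topology

variable {S : Type*}

-- `b` is the inverse of `a` in the maximal subgroup `H(a * b)`; `HSet` and `IsInvMap` are
-- phrased through this relation.
def IsGroupInverse {M : Type*} [Mul M] (a b : M) : Prop :=
  a * b = b * a ∧ a * b * a = a ∧ b * a * b = b

namespace IsGroupInverse

section Mul

variable {M : Type*} [Mul M] {a b : M}

theorem symm (h : IsGroupInverse a b) : IsGroupInverse b a :=
  ⟨h.1.symm, h.2.2, h.2.1⟩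

theorem commute (h : IsGroupInverse a b) : Commute a b :=
  h.1

theorem mem_hSet (h : IsGroupInverse a b) : a ∈ HSet M :=
  ⟨b, h⟩

end Mul

section Semigroup

variable {M : Type*} [Semigroup M] {a b c : M}

theorem isIdempotentElem_mul (h : IsGroupInverse a b) : IsIdempotentElem (a * b) := by
  rw [IsIdempotentElem, ← mul_assoc, h.2.1]

theorem mul_mul_self (h : IsGroupInverse a b) : a * (a * b) = a := by
  rw [h.1, ← mul_assoc, h.2.1]

theorem mul_eq_mul (h : IsGroupInverse a b) (h' : IsGroupInverse a c) : a * b = a * c :=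
  calc a * b = a * c * a * b := by rw [h'.2.1]
    _ = c * (a * (a * b)) := by rw [h'.1, mul_assoc, mul_assoc]
    _ = a * c := by rw [h.mul_mul_self, h'.1]

protected theorem coe (h : IsGroupInverse a b) :
    IsGroupInverse (a : WithOne M) (b : WithOne M) := by
  simpa only [IsGroupInverse, ← WithOne.coe_mul, WithOne.coe_inj] using h

end Semigroup

section Monoid

variable {M : Type*} [Monoid M] {a b : M}

theorem mul_mul_pow (h : IsGroupInverse a b) {n : ℕ} (hn : n ≠ 0) : a * b * a ^ n = a ^ n := by
  obtain ⟨k, rfl⟩ := Nat.exists_eq_succ_of_ne_zero hn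
  rw [pow_succ', ← mul_assoc, h.2.1]

theorem pow_mul_pow (h : IsGroupInverse a b) {n : ℕ} (hn : n ≠ 0) : a ^ n * b ^ n = a * b := by
  rw [← h.commute.mul_pow, h.isIdempotentElem_mul.pow_eq hn]

theorem pow (h : IsGroupInverse a b) {n : ℕ} (hn : n ≠ 0) : IsGroupInverse (a ^ n) (b ^ n) :=
  ⟨(h.commute.pow_pow n n).eq, by rw [h.pow_mul_pow hn, h.mul_mul_pow hn],
    by rw [h.symm.pow_mul_pow hn, h.symm.mul_mul_pow hn]⟩

theorem pow_mul_pow_add (h : IsGroupInverse a b) (i : ℕ) {j : ℕ} (hj : j ≠ 0) :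
    b ^ i * a ^ (i + j) = a ^ j := by
  rcases eq_or_ne i 0 with rfl | hi
  · simp
  rw [pow_add, ← mul_assoc, h.symm.pow_mul_pow hi, ← h.1, h.mul_mul_pow hj]

end Monoid

end IsGroupInverse

theorem IsInvMap.isGroupInverse [Mul S] {inv : S → S} (hinv : IsInvMap S inv) {x : S}
    (hx : x ∈ HSet S) : IsGroupInverse x (inv x) :=
  hinv x hx

section Powers

variable [Semigroup S] {a b e : S}

-- Powers in `S` are computed in the monoid `WithOne S`, where the `pow` lemmas apply.
theorem coe_spow (x : S) {n : ℕ} (hn : n ≠ 0) :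
    ((spow x n : S) : WithOne S) = (x : WithOne S) ^ n := by
  induction n with
  | zero => contradiction
  | succ n ih =>
    rcases eq_or_ne n 0 with rfl | hn'
    · rw [zero_add, pow_one]
      rfl
    · obtain ⟨k, rfl⟩ := Nat.exists_eq_succ_of_ne_zero hn'
      rw [pow_succ, ← ih hn', spow, WithOne.coe_mul]

theorem IsIdempotentElem.spow_eq (he : IsIdempotentElem e) : ∀ n, spow e n = e
  | 0 => rfl
  | 1 => rfl
  | n + 2 => by rw [spow, he.spow_eq (n + 1), he.eq]

namespace IsGroupInverse

theorem spow_mul_spow (h : IsGroupInverse a b) {n : ℕ} (hn : n ≠ 0) :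
    spow a n * spow b n = a * b :=
  WithOne.coe_injective <| by
    simpa only [WithOne.coe_mul, coe_spow _ hn] using h.coe.pow_mul_pow hn

theorem spow_mul_spow_add (h : IsGroupInverse a b) {i j : ℕ} (hi : i ≠ 0) (hj : j ≠ 0) :
    spow b i * spow a (i + j) = spow a j :=
  WithOne.coe_injective <| by
    simpa only [WithOne.coe_mul, coe_spow _ hi, coe_spow _ hj, coe_spow _ (by omega : i + j ≠ 0)]
      using h.coe.pow_mul_pow_add i hj

theorem spow_spow (h : IsGroupInverse a b) {n : ℕ} (hn : n ≠ 0) :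
    IsGroupInverse (spow a n) (spow b n) := by
  have h' := h.coe.pow hn
  rw [← coe_spow _ hn, ← coe_spow _ hn] at h'
  simpa only [IsGroupInverse, ← WithOne.coe_mul, WithOne.coe_inj] using h'

end IsGroupInverse

theorem IsInvMap.spow_mul_inv_spow {inv : S → S} (hinv : IsInvMap S inv) {w : S}
    (hw : w ∈ HSet S) {n : ℕ} (hn : n ≠ 0) : spow w n * inv (spow w n) = w * inv w :=
  let h := (hinv.isGroupInverse hw).spow_spow hn
  ((hinv.isGroupInverse h.mem_hSet).mul_eq_mul h).trans
    ((hinv.isGroupInverse hw).spow_mul_spow hn)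

end Powers

section Topology

theorem CountablyCompactSpace'.exists_mapClusterPt {X : Type*} [TopologicalSpace X]
    (hX : CountablyCompactSpace' X) (c : ℕ → X) : ∃ p, MapClusterPt p atTop c := by
  simp_rw [mapClusterPt_atTop_iff_forall_mem_closure]
  by_contra! h
  obtain ⟨F, hF⟩ := hX (fun n => (closure (c '' Set.Ici n))ᶜ)
    (fun _ => isClosed_closure.isOpen_compl) (Set.iUnion_eq_univ_iff.2 h)
  obtain ⟨n, hn, hcn⟩ := Set.mem_iUnion₂.1 (hF ▸ Set.mem_univ (c (F.sup id)))
  exact hcn (subset_closure ⟨_, F.le_sup (f := id) hn, rfl⟩)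

variable [Semigroup S] [TopologicalSpace S] [ContinuousMul S]

theorem continuous_spow : ∀ n : ℕ, Continuous fun x : S => spow x n
  | 0 => continuous_id
  | 1 => continuous_id
  | n + 2 => (continuous_spow (n + 1)).mul continuous_id

theorem IsIdempotentElem.eventually_forall_spow_mem {e : S} (he : IsIdempotentElem e)
    {U : Set S} (hU : U ∈ 𝓝 e) (k : ℕ) : ∀ᶠ a in 𝓝 e, ∀ m ≤ k, spow a m ∈ U :=
  (Set.finite_le_nat k).eventually_all.2 fun m _ =>
    (continuous_spow m).continuousAt.preimage_mem_nhds (by rwa [he.spow_eq])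

theorem IsGroupInverse.mul_mem_closure_spow [T2Space S] (hcc : CountablyCompactSpace' (S × S))
    {a b : S} (h : IsGroupInverse a b) : a * b ∈ closure (spow a '' {n | n ≠ 0}) := by
  set P := closure (spow a '' {n | n ≠ 0})
  obtain ⟨q, hq⟩ := hcc.exists_mapClusterPt fun m => (spow a (m + 1), spow b (m + 1))
  have hq₁ : MapClusterPt q.1 atTop fun m => spow a (m + 1) :=
    hq.continuousAt_comp continuous_fst.continuousAt
  have hq₂ : MapClusterPt q.2 atTop fun m => spow b (m + 1) :=
    hq.continuousAt_comp continuous_snd.continuousAt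
  have hba : q.2 * q.1 = a * b :=
    (isClosed_eq (continuous_snd.mul continuous_fst) continuous_const).mem_of_mapClusterPt hq
      (.of_forall fun m => (h.symm.spow_mul_spow m.succ_ne_zero).trans h.1.symm)
  -- `b ^ i * q.1` is a cluster point of `b ^ i * a ^ (m + 1) = a ^ (m + 1 - i)`.
  have hbq : ∀ i ≠ 0, spow b i * q.1 ∈ P := fun i hi =>
    (isClosed_closure.preimage (continuous_const_mul _)).mem_of_mapClusterPt hq₁ <|
      (eventually_ge_atTop i).mono fun m hm => by
        obtain ⟨j, rfl⟩ := Nat.exists_eq_add_of_le hm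
        exact subset_closure
          ⟨j + 1, j.succ_ne_zero, (h.spow_mul_spow_add hi j.succ_ne_zero).symm⟩
  rw [← hba]
  exact (isClosed_closure.preimage (continuous_mul_const _)).mem_of_mapClusterPt hq₂
    (.of_forall fun m => hbq _ m.succ_ne_zero)

theorem isClosed_setOf_isGroupInverse [T2Space S] :
    IsClosed {p : S × S | IsGroupInverse p.1 p.2} :=
  (isClosed_eq (continuous_fst.mul continuous_snd) (continuous_snd.mul continuous_fst)).inter <|
    (isClosed_eq ((continuous_fst.mul continuous_snd).mul continuous_fst) continuous_fst).inter <|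
      isClosed_eq ((continuous_snd.mul continuous_fst).mul continuous_snd) continuous_snd

theorem exists_mem_hSet_forall_spow_mem [T2Space S] (hcc : CountablyCompactSpace' (S × S))
    {inv : S → S} (hinv : IsInvMap S inv) {x : S} (hx : x ∈ HSet S) {C U : Set S}
    (hC : C ∈ 𝓝 (x * inv x)) (hU : ∃ᶠ w in 𝓝[HSet S] x, w * inv w ∉ U) (k : ℕ) :
    ∃ ζ ∈ HSet S, (∀ m ≤ k, spow ζ m ∈ C) ∧ ζ * inv ζ ∉ U := by
  have hx' := hinv.isGroupInverse hx
  obtain ⟨V, hVC, hVopen, heV⟩ :=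
    mem_nhds_iff.1 (hx'.isIdempotentElem_mul.eventually_forall_spow_mem hC k)
  obtain ⟨_, hxV, n, hn, rfl⟩ := mem_closure_iff.1 (hx'.mul_mem_closure_spow hcc) V hVopen heV
  have hD : (spow · n) ⁻¹' V ∈ 𝓝[HSet S] x :=
    mem_nhdsWithin_of_mem_nhds ((hVopen.preimage (continuous_spow n)).mem_nhds hxV)
  obtain ⟨w, ⟨hwU, hwH⟩, hwV⟩ :=
    ((hU.and_eventually self_mem_nhdsWithin).and_eventually hD).exists
  refine ⟨spow w n, ((hinv.isGroupInverse hwH).spow_spow hn).mem_hSet, hVC hwV, ?_⟩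
  rwa [hinv.spow_mul_inv_spow hwH hn]

end Topology

theorem stmt8 [Semigroup S] [TopologicalSpace S] [ContinuousMul S] [T3Space S]
    (hcc : CountablyCompactSpace' (S × S))
    (inv : S → S) (hinv : IsInvMap S inv) :
    ContinuousOn (fun x => x * inv x) (HSet S) := by
  intro x hx
  by_contra hdisc
  obtain ⟨U, hxU, hUopen, hfreq⟩ :
      ∃ U, x * inv x ∈ U ∧ IsOpen U ∧ ∃ᶠ w in 𝓝[HSet S] x, w * inv w ∉ U := by
    simpa [ContinuousWithinAt, (nhds_basis_opens _).tendsto_right_iff] using hdisc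
  obtain ⟨C, hC, hCclosed, hCU⟩ := exists_mem_nhds_isClosed_subset (hUopen.mem_nhds hxU)
  choose ζ hζH hζC hζU using exists_mem_hSet_forall_spow_mem hcc hinv hx hC hfreq
  obtain ⟨p, hp⟩ := hcc.exists_mapClusterPt fun k => (ζ k, inv (ζ k))
  have hpinv : IsGroupInverse p.1 p.2 := isClosed_setOf_isGroupInverse.mem_of_mapClusterPt hp
    (.of_forall fun k => hinv.isGroupInverse (hζH k))
  have hpU : p.1 * p.2 ∉ U :=
    (hUopen.isClosed_compl.preimage (continuous_fst.mul continuous_snd)).mem_of_mapClusterPt hp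
      (.of_forall hζU)
  have hpC : spow p.1 '' {n | n ≠ 0} ⊆ C := by
    rintro _ ⟨m, -, rfl⟩
    exact (hCclosed.preimage ((continuous_spow m).comp continuous_fst)).mem_of_mapClusterPt hp
      ((eventually_ge_atTop m).mono fun k hk => hζC k m hk)
  exact hpU (hCU (closure_minimal hpC hCclosed (hpinv.mul_mem_closure_spow hcc)))
end

section
/- Let S be a Hausdorff countably compact topological semigroup. Then the projection π : H(S) → E(S), π(x) = x·x⁻¹, is sequentially continuous. -/
open Filter Topology

variable {S : Type*}

private lemma unique_comm_inv {S : Type*} [Semigroup S] {x y y' : S}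
    (h1 : x * y = y * x) (h2 : x * y * x = x) (h3 : y * x * y = y)
    (h1' : x * y' = y' * x) (h2' : x * y' * x = x) (h3' : y' * x * y' = y') :
    x * y = x * y' := by
  have e1 : x * y = (x * y') * (x * y) := by
    calc x * y = x * y' * x * y := by rw [h2']
    _ = (x * y') * (x * y) := by rw [mul_assoc]
  have e2 : x * y' = (x * y') * (x * y) := by
    calc x * y' = y' * x := h1'
    _ = y' * (x * y * x) := by rw [h2]
    _ = (y' * x) * (y * x) := by simp only [mul_assoc]
    _ = (x * y') * (x * y) := by rw [h1', h1]
  rw [e1, ← e2]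

private lemma exists_cluster' {S : Type*} [TopologicalSpace S]
    (hcc : CountablyCompactSpace' S) (w : ℕ → S) :
    ∃ v : S, ∀ N : ℕ, v ∈ closure (w '' Set.Ici N) := by
  by_contra h
  push_neg at h
  have hcov : (⋃ n, (closure (w '' Set.Ici n))ᶜ) = Set.univ := by
    ext v
    simp only [Set.mem_iUnion, Set.mem_compl_iff, Set.mem_univ, iff_true]
    exact h v
  obtain ⟨F, hF⟩ := hcc (fun n => (closure (w '' Set.Ici n))ᶜ)
    (fun n => isClosed_closure.isOpen_compl) hcov
  have hmem : w (F.sup id) ∈ ⋃ n ∈ F, (closure (w '' Set.Ici n))ᶜ :=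
    hF ▸ Set.mem_univ _
  simp only [Set.mem_iUnion, Set.mem_compl_iff] at hmem
  obtain ⟨n, hnF, hn⟩ := hmem
  exact hn (subset_closure ⟨F.sup id, Finset.le_sup (f := id) hnF, rfl⟩)

private lemma cluster_filter' {S : Type*} [TopologicalSpace S] {w : ℕ → S} {v : S}
    (hv : ∀ N : ℕ, v ∈ closure (w '' Set.Ici N)) :
    (atTop ⊓ comap w (𝓝 v)).NeBot := by
  rw [Filter.inf_neBot_iff]
  intro s hs t ht
  obtain ⟨N, hN⟩ := mem_atTop_sets.mp hs
  obtain ⟨U, hU, hUt⟩ := Filter.mem_comap.mp ht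
  obtain ⟨z, hzU, hzim⟩ := mem_closure_iff_nhds.mp (hv N) U hU
  obtain ⟨n, hnN, rfl⟩ := hzim
  exact ⟨n, hN n hnN, hUt hzU⟩

theorem stmt13 [Semigroup S] [TopologicalSpace S] [ContinuousMul S] [T2Space S]
    (hcc : CountablyCompactSpace' S) (inv : S → S) (hinv : IsInvMap S inv)
    (u : ℕ → S) (hu : ∀ n, u n ∈ HSet S) (x : S) (hx : x ∈ HSet S)
    (hlim : Tendsto u atTop (𝓝 x)) :
    Tendsto (fun n => u n * inv (u n)) atTop (𝓝 (x * inv x)) := by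
  rw [tendsto_nhds]
  intro U hUo hxU
  by_contra hev
  have hfreq : ∃ᶠ n in atTop, u n * inv (u n) ∉ U := Filter.not_eventually.mp hev
  obtain ⟨φ, hφmono, hφ⟩ := Filter.extraction_of_frequently_atTop hfreq
  obtain ⟨v, hv⟩ := exists_cluster' hcc (fun k => inv (u (φ k)))
  set L : Filter ℕ := atTop ⊓ comap (fun k => inv (u (φ k))) (𝓝 v) with hLdef
  haveI hne : L.NeBot := cluster_filter' hv
  have hwL : Tendsto (fun k => inv (u (φ k))) L (𝓝 v) :=
    tendsto_iff_comap.mpr inf_le_right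
  have huL : Tendsto (fun k => u (φ k)) L (𝓝 x) :=
    (hlim.comp hφmono.tendsto_atTop).mono_left inf_le_left
  have h1 : Tendsto (fun k => u (φ k) * inv (u (φ k))) L (𝓝 (x * v)) := huL.mul hwL
  have h2 : Tendsto (fun k => inv (u (φ k)) * u (φ k)) L (𝓝 (v * x)) := hwL.mul huL
  have heq1 : (fun k => u (φ k) * inv (u (φ k))) = fun k => inv (u (φ k)) * u (φ k) :=
    funext fun k => (hinv _ (hu _)).1
  have hxv : x * v = v * x := tendsto_nhds_unique (heq1 ▸ h1) h2
  have h3 : Tendsto (fun k => u (φ k) * inv (u (φ k)) * u (φ k)) L (𝓝 (x * v * x)) :=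
    h1.mul huL
  have heq3 : (fun k => u (φ k) * inv (u (φ k)) * u (φ k)) = fun k => u (φ k) :=
    funext fun k => (hinv _ (hu _)).2.1
  have hxvx : x * v * x = x := tendsto_nhds_unique (heq3 ▸ h3) huL
  have h4 : Tendsto (fun k => inv (u (φ k)) * u (φ k) * inv (u (φ k))) L (𝓝 (v * x * v)) :=
    h2.mul hwL
  have heq4 : (fun k => inv (u (φ k)) * u (φ k) * inv (u (φ k))) = fun k => inv (u (φ k)) :=
    funext fun k => (hinv _ (hu _)).2.2
  have hvxv : v * x * v = v := tendsto_nhds_unique (heq4 ▸ h4) hwL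
  obtain ⟨hc, hxx, hii⟩ := hinv x hx
  have hkey : x * v = x * inv x := unique_comm_inv hxv hxvx hvxv hc hxx hii
  have hinU : x * v ∈ U := hkey ▸ hxU
  have hninU : x * v ∈ Uᶜ :=
    hUo.isClosed_compl.mem_of_tendsto h1 (Filter.Eventually.of_forall fun k => hφ k)
  exact hninU hinU
end

section
/- Let T be a compact Hausdorff topological semigroup. Then the graph of the inversion on the Clifford part, Gr = {(x,y) ∈ T × T : xyx = x, yxy = y, xy = yx}, is a compact subset of T × T, and consequently the inversion inv : H(T) → H(T) is continuous. -/
open Filter Topology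

variable {S : Type*}

/-!
The graph is cut out by three equations between continuous maps into a Hausdorff space, so it
is closed in the compact space `T × T`. Commuting inverses are unique, so over `H(T)` this graph
is exactly the graph of `inv`; a map into a compact space with closed graph is continuous,
because preimages of closed sets are projections of closed sets along a compact factor.
-/

theorem continuous_of_isClosed_graph_of_compactSpace {X Y : Type*} [TopologicalSpace X]
    [TopologicalSpace Y] [CompactSpace Y] {f : X → Y}
    (hf : IsClosed {p : X × Y | p.2 = f p.1}) : Continuous f := by
  refine continuous_iff_isClosed.mpr fun C hC => ?_
  have hpreimage : f ⁻¹' C = Prod.fst '' ({p : X × Y | p.2 = f p.1} ∩ Set.univ ×ˢ C) := by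
    ext x
    simp
  rw [hpreimage]
  exact isClosedMap_fst_of_compactSpace _ (hf.inter (isClosed_univ.prod hC))

def commutingInverseGraph (T : Type*) [Mul T] : Set (T × T) :=
  {p | p.1 * p.2 * p.1 = p.1 ∧ p.2 * p.1 * p.2 = p.2 ∧ p.1 * p.2 = p.2 * p.1}

theorem isClosed_commutingInverseGraph (T : Type*) [Mul T] [TopologicalSpace T]
    [ContinuousMul T] [T2Space T] : IsClosed (commutingInverseGraph T) :=
  (isClosed_eq (by fun_prop) continuous_fst).inter
    ((isClosed_eq (by fun_prop) continuous_snd).inter (isClosed_eq (by fun_prop) (by fun_prop)))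

theorem commutingInverse_unique {T : Type*} [Semigroup T] {x y z : T}
    (hy : (x, y) ∈ commutingInverseGraph T) (hz : (x, z) ∈ commutingInverseGraph T) :
    y = z := by
  obtain ⟨hxyx, hyxy, hxy⟩ : x * y * x = x ∧ y * x * y = y ∧ x * y = y * x := hy
  obtain ⟨hxzx, hzxz, hxz⟩ : x * z * x = x ∧ z * x * z = z ∧ x * z = z * x := hz
  have hxxz : x * (x * z) = x := by rw [hxz, ← mul_assoc, hxzx]
  -- `xy` and `xz` are both the identity of the group containing `x`
  have hsame_unit : x * y = x * z :=
    calc x * y = y * (x * (x * z)) := by rw [hxxz, hxy]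
      _ = x * y * x * z := by rw [← mul_assoc, ← hxy, ← mul_assoc]
      _ = x * z := by rw [hxyx]
  calc y = y * (x * y) := by rw [← mul_assoc, hyxy]
    _ = y * (x * z) := by rw [hsame_unit]
    _ = x * z * z := by rw [← mul_assoc, ← hxy, hsame_unit]
    _ = z := by rw [hxz, hzxz]

theorem mem_commutingInverseGraph_iff {T : Type*} [Semigroup T] {inv : T → T}
    (hinv : IsInvMap T inv) {x : T} (hx : x ∈ HSet T) (y : T) :
    (x, y) ∈ commutingInverseGraph T ↔ y = inv x := by
  have hx_inv : (x, inv x) ∈ commutingInverseGraph T :=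
    ⟨(hinv x hx).2.1, (hinv x hx).2.2, (hinv x hx).1⟩
  exact ⟨fun hy => commutingInverse_unique hy hx_inv, fun hy => hy ▸ hx_inv⟩

theorem stmt16 {T : Type*} [Semigroup T] [TopologicalSpace T] [ContinuousMul T]
    [CompactSpace T] [T2Space T]
    (inv : T → T) (hinv : IsInvMap T inv) :
    IsCompact {p : T × T | p.1 * p.2 * p.1 = p.1 ∧ p.2 * p.1 * p.2 = p.2 ∧
        p.1 * p.2 = p.2 * p.1} ∧
      ContinuousOn inv (HSet T) := by
  have hclosed := isClosed_commutingInverseGraph T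
  refine ⟨hclosed.isCompact, continuousOn_iff_continuous_domRestrict.mpr ?_⟩
  have hgraph : {p : HSet T × T | p.2 = (HSet T).domRestrict inv p.1}
      = Prod.map Subtype.val id ⁻¹' commutingInverseGraph T := by
    ext ⟨⟨x, hx⟩, y⟩
    exact (mem_commutingInverseGraph_iff hinv hx y).symm
  exact continuous_of_isClosed_graph_of_compactSpace
    (hgraph ▸ hclosed.preimage (by fun_prop))
end
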